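/- Let σ > 0 and let λ : [0,1] → ℝ be continuous with λ(t) > 0 for all t ∈ [0,1]. Define v(t) = sqrt((1−t)² + t²σ²), α(t) = v′(t)/v(t), γ = σ² ∫₀¹ (λ(t) v(t)²)⁻¹ dt, and P(t) = ( v(t)² ( σ⁻² + ∫_t^1 (λ(u) v(u)²)⁻¹ du ) )⁻¹. Let V : [0,1] → ℝ be differentiable with V(0) = 1 and V′(t) = 2 ( α(t) − P(t)/λ(t) ) V(t) for all t ∈ [0,1]. Then V(1) = σ² / (1 + γ)². -/

import Mathlib

/-!
Write `I(t) = ∫_t^1 (λ v²)⁻¹` and `W = v² (σ⁻² + I)²`. Since `I' = -(λ v²)⁻¹` and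
`P = (v² (σ⁻² + I))⁻¹`, logarithmic differentiation gives `W'/W = 2 v'/v - 2 P/λ`, so `W` solves
the same linear equation as `V`. Hence `V/W` is constant, and
`V(1) = W(1)/W(0) = σ² σ⁻⁴ / (σ⁻² + I(0))² = σ² / (1 + γ)²`.
-/

open Set

theorem ContinuousOn.hasDerivWithinAt_integral_left {f : ℝ → ℝ} {a b t : ℝ}
    (hf : ContinuousOn f (Icc a b)) (ht : t ∈ Icc a b) :
    HasDerivWithinAt (fun s ↦ ∫ u in s..b, f u) (-f t) (Icc a b) t := by
  have : Fact (t ∈ Icc a b) := ⟨ht⟩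
  refine intervalIntegral.integral_hasDerivWithinAt_left ?_
    (hf.stronglyMeasurableAtFilter_nhdsWithin measurableSet_Icc t) (hf t ht)
  exact (hf.mono (uIcc_subset_Icc ht (right_mem_Icc.2 (ht.1.trans ht.2)))).intervalIntegrable

theorem mul_eq_mul_of_hasDerivWithinAt_linear {k V W : ℝ → ℝ} {a b : ℝ} (hab : a ≤ b)
    (hV : ∀ t ∈ Icc a b, HasDerivWithinAt V (k t * V t) (Icc a b) t)
    (hW : ∀ t ∈ Icc a b, HasDerivWithinAt W (k t * W t) (Icc a b) t)
    (hW₀ : ∀ t ∈ Icc a b, W t ≠ 0) :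
    V b * W a = V a * W b := by
  have hquot : ∀ t ∈ Icc a b, HasDerivWithinAt (fun s ↦ V s / W s) 0 (Icc a b) t := by
    intro t ht
    exact ((hV t ht).div (hW t ht) (hW₀ t ht)).congr_deriv (by ring)
  have hconst := constant_of_has_deriv_right_zero
    (fun t ht ↦ (hquot t ht).continuousWithinAt)
    (fun t ht ↦ (hquot t (Ico_subset_Icc_self ht)).mono_of_mem_nhdsWithin
      (Icc_mem_nhdsGE_of_mem ht)) b (right_mem_Icc.2 hab)
  have := hW₀ a (left_mem_Icc.2 hab)
  have := hW₀ b (right_mem_Icc.2 hab)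
  field_simp at hconst
  linarith

theorem hasDerivWithinAt_sq_mul_add_sq {v J : ℝ → ℝ} {s : Set ℝ} {t v' l c : ℝ}
    (hv : HasDerivAt v v' t) (hJ : HasDerivWithinAt J (-(l * v t ^ 2)⁻¹) s t)
    (hvt : v t ≠ 0) (hl : l ≠ 0) (hc : c + J t ≠ 0) :
    HasDerivWithinAt (fun s ↦ v s ^ 2 * (c + J s) ^ 2)
      (2 * (v' / v t - (v t ^ 2 * (c + J t))⁻¹ / l) * (v t ^ 2 * (c + J t) ^ 2)) s t := by
  refine ((hv.hasDerivWithinAt.pow 2).mul ((hJ.const_add c).pow 2)).congr_deriv ?_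
  simp only [Pi.pow_apply]
  field_simp
  ring

theorem one_sub_sq_add_sq_mul_sq_pos {σ : ℝ} (hσ : σ ≠ 0) (t : ℝ) :
    0 < (1 - t) ^ 2 + t ^ 2 * σ ^ 2 := by
  rcases eq_or_ne t 1 with rfl | ht
  · simpa using pow_pos (abs_pos.2 hσ) 2
  · have : 1 - t ≠ 0 := sub_ne_zero.2 ht.symm
    positivity

theorem differentiable_sqrt_one_sub_sq_add_sq_mul_sq {σ : ℝ} (hσ : σ ≠ 0) :
    Differentiable ℝ fun t : ℝ ↦ √((1 - t) ^ 2 + t ^ 2 * σ ^ 2) := fun t ↦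
  (by fun_prop : Differentiable ℝ _).differentiableAt.sqrt
    (one_sub_sq_add_sq_mul_sq_pos hσ t).ne'

theorem optimal_terminal_variance
    (σ : ℝ) (hσ : 0 < σ)
    (lam : ℝ → ℝ) (hlamc : ContinuousOn lam (Icc 0 1))
    (hlam : ∀ t ∈ Icc (0:ℝ) 1, 0 < lam t)
    (v α P : ℝ → ℝ) (γ : ℝ)
    (hv : ∀ t, v t = Real.sqrt ((1 - t) ^ 2 + t ^ 2 * σ ^ 2))
    (hα : ∀ t, α t = deriv v t / v t)
    (hγ : γ = σ ^ 2 * ∫ t in (0:ℝ)..1, (lam t * v t ^ 2)⁻¹)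
    (hP : ∀ t, P t = (v t ^ 2 * ((σ ^ 2)⁻¹ + ∫ u in t..(1:ℝ), (lam u * v u ^ 2)⁻¹))⁻¹)
    (V : ℝ → ℝ) (hV0 : V 0 = 1)
    (hV : ∀ t ∈ Icc (0:ℝ) 1, HasDerivAt V (2 * (α t - P t / lam t) * V t) t) :
    V 1 = σ ^ 2 / (1 + γ) ^ 2 := by
  have hvpos (t : ℝ) : 0 < v t :=
    hv t ▸ Real.sqrt_pos.2 (one_sub_sq_add_sq_mul_sq_pos hσ.ne' t)
  have hvdiff : Differentiable ℝ v :=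
    funext hv ▸ differentiable_sqrt_one_sub_sq_add_sq_mul_sq hσ.ne'
  set J : ℝ → ℝ := fun t ↦ ∫ u in t..1, (lam u * v u ^ 2)⁻¹
  have hJ (t : ℝ) (ht : t ∈ Icc (0:ℝ) 1) :
      HasDerivWithinAt J (-(lam t * v t ^ 2)⁻¹) (Icc 0 1) t :=
    ContinuousOn.hasDerivWithinAt_integral_left
      ((hlamc.mul (hvdiff.continuous.pow 2).continuousOn).inv₀
        fun u hu ↦ (mul_pos (hlam u hu) (pow_pos (hvpos u) 2)).ne') ht
  have hJnonneg (t : ℝ) (ht : t ∈ Icc (0:ℝ) 1) : 0 ≤ J t :=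
    intervalIntegral.integral_nonneg ht.2 fun u hu ↦
      inv_nonneg.2 (mul_pos (hlam u ⟨ht.1.trans hu.1, hu.2⟩) (pow_pos (hvpos u) 2)).le
  have hcJ (t : ℝ) (ht : t ∈ Icc (0:ℝ) 1) : 0 < (σ ^ 2)⁻¹ + J t := by
    have := hJnonneg t ht
    positivity
  have hratio := mul_eq_mul_of_hasDerivWithinAt_linear zero_le_one
    (fun t ht ↦ (hV t ht).hasDerivWithinAt)
    (fun t ht ↦ hα t ▸ hP t ▸ hasDerivWithinAt_sq_mul_add_sq
      (hvdiff t).hasDerivAt (hJ t ht) (hvpos t).ne' (hlam t ht).ne' (hcJ t ht).ne')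
    (fun t ht ↦ (mul_pos (pow_pos (hvpos t) 2) (pow_pos (hcJ t ht) 2)).ne')
  have hv0 : v 0 = 1 := by simp [hv]
  have hv1 : v 1 = σ := by simp [hv, Real.sqrt_sq hσ.le]
  have hJ1 : J 1 = 0 := intervalIntegral.integral_same
  have hγJ : γ = σ ^ 2 * J 0 := hγ
  simp only [hV0, hv0, hv1, hJ1] at hratio
  rw [hγJ]
  have := hJnonneg 0 (left_mem_Icc.2 zero_le_one)
  field_simp at hratio
  rw [eq_div_iff (by positivity)]
  linear_combination hratio
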